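/- Let G = (V,E) be a finite d-regular simple graph on n vertices with adjacency matrix A and largest adjacency eigenvalue λ₁ (so λ₁ = d). Let β ∈ [0,1] satisfy βλ₁ < 1, and let I ⊆ V be a nonempty set of initially infected vertices, |X(0)| = |I|. Then the expected final size of the Reed-Frost epidemic satisfies E[|Y(∞)|] ≤ |X(0)| / (1 − βλ₁). -/

import Mathlib

open Finset

namespace VirusSpread

variable {V : Type*} [Fintype V] [DecidableEq V]

/-- Bernoulli bond percolation on `G`: the subgraph of `G` consisting of the retained
edge set `H`. -/
def percSubgraph (G : SimpleGraph V) (H : Finset (Sym2 V)) : SimpleGraph V where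
  Adj u v := G.Adj u v ∧ s(u, v) ∈ H
  symm := ⟨fun u v h => ⟨h.1.symm, by rw [Sym2.eq_swap]; exact h.2⟩⟩
  loopless := ⟨fun u h => G.loopless.irrefl u h.1⟩

open scoped Classical in
/-- The set of vertices joined to the initial set `I` by a path of retained edges;
this is the final removed set `Y(∞)` of the Reed–Frost epidemic. -/
noncomputable def reachedSet (G : SimpleGraph V) (H : Finset (Sym2 V)) (I : Finset V) :
    Finset V :=
  Finset.univ.filter fun v => ∃ u ∈ I, (percSubgraph G H).Reachable u v

open scoped Classical in
/-- The probability of the percolation configuration with retained edge set `H`, when each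
edge of `G` is retained independently with probability `β`. -/
noncomputable def percWeight (G : SimpleGraph V) (β : ℝ) (H : Finset (Sym2 V)) : ℝ :=
  β ^ H.card * (1 - β) ^ (G.edgeFinset.card - H.card)

open scoped Classical in
/-- The expected final size `E[|Y(∞)|]` of the Reed–Frost epidemic on `G` with
per-contact infection probability `β`, started from the initial infected set `I`. -/
noncomputable def expectedFinalSize (G : SimpleGraph V) (β : ℝ) (I : Finset V) : ℝ :=
  ∑ H ∈ G.edgeFinset.powerset, percWeight G β H * ((reachedSet G H I).card : ℝ)


/-!
A vertex lies in `Y(∞)` only if some path from `I` to it has all its edges retained; a fixed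
path with `k` edges is retained with probability `β ^ k`, and a `d`-regular graph has exactly
`d ^ k` walks of length `k` from each vertex. The union bound over paths therefore gives
`E|Y(∞)| ≤ |I| ∑ₖ (β d) ^ k ≤ |I| / (1 - β d)`, and `d ≤ λ₁` because the constant vector is an
eigenvector of `A` with eigenvalue `d`.
-/

theorem sum_Icc_pow_mul_one_sub_pow {α R : Type*} [DecidableEq α] [CommRing R]
    {s t : Finset α} (hts : t ⊆ s) (p : R) :
    ∑ u ∈ Icc t s, p ^ #u * (1 - p) ^ (#s - #u) = p ^ #t := by
  have hdisj {w : Finset α} (hw : w ∈ (s \ t).powerset) : Disjoint t w :=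
    disjoint_of_subset_right (mem_powerset.1 hw) disjoint_sdiff
  rw [Icc_eq_image_powerset hts, sum_image fun w hw w' hw' h => by
    rw [← union_sdiff_cancel_left (hdisj hw), h, union_sdiff_cancel_left (hdisj hw')]]
  calc ∑ w ∈ (s \ t).powerset, p ^ #(t ∪ w) * (1 - p) ^ (#s - #(t ∪ w))
      = ∑ w ∈ (s \ t).powerset, p ^ #t * (p ^ #w * (1 - p) ^ (#(s \ t) - #w)) := by
        refine sum_congr rfl fun w hw => ?_
        rw [card_union_of_disjoint (hdisj hw), card_sdiff_of_subset hts, pow_add, mul_assoc,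
          Nat.sub_add_eq, Nat.sub_right_comm]
    _ = p ^ #t := by rw [← mul_sum, sum_pow_mul_eq_add_pow, add_sub_cancel, one_pow, mul_one]

theorem exists_isPath_of_mem_reachedSet {G : SimpleGraph V} {H : Finset (Sym2 V)} {I : Finset V}
    {v : V} (hv : v ∈ reachedSet G H I) :
    ∃ u ∈ I, ∃ p : G.Walk u v, p.IsPath ∧ p.edges.toFinset ⊆ H := by
  simp only [reachedSet, mem_filter, mem_univ, true_and] at hv
  obtain ⟨u, hu, hreach⟩ := hv
  obtain ⟨p, hp⟩ := hreach.exists_isPath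
  have hle : percSubgraph G H ≤ G := fun _ _ h => h.1
  refine ⟨u, hu, p.mapLe hle, (SimpleGraph.Walk.isPath_mapLe hle).2 hp, fun e he => ?_⟩
  rw [List.mem_toFinset, SimpleGraph.Walk.edges_mapLe_eq_edges] at he
  have he' := p.edges_subset_edgeSet he
  induction e using Sym2.ind
  exact he'.2

section Percolation

open scoped Classical

variable (G : SimpleGraph V)

theorem sum_percWeight_filter_superset (β : ℝ) {S : Finset (Sym2 V)} (hS : S ⊆ G.edgeFinset) :
    ∑ H ∈ G.edgeFinset.powerset with S ⊆ H, percWeight G β H = β ^ #S := by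
  rw [← Icc_eq_filter_powerset]
  exact sum_Icc_pow_mul_one_sub_pow hS β

theorem sum_percWeight_filter_edges_superset (β : ℝ) {u v : V} {p : G.Walk u v}
    (hp : p.IsTrail) :
    ∑ H ∈ G.edgeFinset.powerset with p.edges.toFinset ⊆ H, percWeight G β H = β ^ p.length := by
  rw [sum_percWeight_filter_superset G β, List.toFinset_card_of_nodup hp.edges_nodup,
    p.length_edges]
  intro e he
  exact G.mem_edgeFinset.2 (p.edges_subset_edgeSet (List.mem_toFinset.1 he))

theorem card_reachedSet_le [G.LocallyFinite] (H : Finset (Sym2 V)) (I : Finset V) :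
    #(reachedSet G H I) ≤ ∑ u ∈ I, ∑ k ∈ range (Fintype.card V), ∑ v,
      #{p ∈ G.finsetWalkLength k u v | p.IsPath ∧ p.edges.toFinset ⊆ H} := by
  calc #(reachedSet G H I) = ∑ v, if v ∈ reachedSet G H I then 1 else 0 := by
        rw [sum_boole, filter_mem_eq_inter, univ_inter, Nat.cast_id]
    _ ≤ ∑ v, ∑ u ∈ I, ∑ k ∈ range (Fintype.card V),
          #{p ∈ G.finsetWalkLength k u v | p.IsPath ∧ p.edges.toFinset ⊆ H} := by
        refine sum_le_sum fun v _ => ?_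
        split_ifs with hv
        · obtain ⟨u, hu, p, hp, hpH⟩ := exists_isPath_of_mem_reachedSet hv
          show 0 < _
          refine sum_pos_iff.2 ⟨u, hu, ?_⟩
          refine sum_pos_iff.2 ⟨p.length, mem_range.2 hp.length_lt, ?_⟩
          exact card_pos.2 ⟨p, mem_filter.2 ⟨SimpleGraph.mem_finsetWalkLength_iff.2 rfl, hp, hpH⟩⟩
        · exact Nat.zero_le _
    _ = _ := by
        rw [sum_comm]
        exact sum_congr rfl fun u _ => sum_comm

theorem sum_percWeight_mul_card_filter_le [G.LocallyFinite] {β : ℝ} (hβ0 : 0 ≤ β) (k : ℕ)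
    (u v : V) :
    ∑ H ∈ G.edgeFinset.powerset, percWeight G β H *
        #{p ∈ G.finsetWalkLength k u v | p.IsPath ∧ p.edges.toFinset ⊆ H}
      ≤ #(G.finsetWalkLength k u v) * β ^ k := by
  simp_rw [natCast_card_filter, mul_sum]
  rw [sum_comm, ← nsmul_eq_mul, ← sum_const]
  refine sum_le_sum fun p hp => ?_
  obtain rfl := SimpleGraph.mem_finsetWalkLength_iff.1 hp
  by_cases hpath : p.IsPath
  · simp only [hpath, true_and, mul_ite, mul_one, mul_zero]
    rw [← sum_filter, sum_percWeight_filter_edges_superset G β hpath.isTrail]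
  · simp only [hpath, false_and, if_false, mul_zero, sum_const_zero]
    positivity

theorem expectedFinalSize_le_sum_card_finsetWalkLength [G.LocallyFinite] {β : ℝ} (hβ0 : 0 ≤ β)
    (hβ1 : β ≤ 1) (I : Finset V) :
    expectedFinalSize G β I ≤ ∑ u ∈ I, ∑ k ∈ range (Fintype.card V), ∑ v,
      (#(G.finsetWalkLength k u v) : ℝ) * β ^ k := by
  calc expectedFinalSize G β I
      ≤ ∑ H ∈ G.edgeFinset.powerset, ∑ u ∈ I, ∑ k ∈ range (Fintype.card V), ∑ v,
          percWeight G β H *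
            #{p ∈ G.finsetWalkLength k u v | p.IsPath ∧ p.edges.toFinset ⊆ H} := by
        refine sum_le_sum fun H _ => ?_
        simp only [← mul_sum]
        exact mul_le_mul_of_nonneg_left (by exact_mod_cast card_reachedSet_le G H I)
          (mul_nonneg (pow_nonneg hβ0 _) (pow_nonneg (sub_nonneg.2 hβ1) _))
    _ = ∑ u ∈ I, ∑ k ∈ range (Fintype.card V), ∑ v, ∑ H ∈ G.edgeFinset.powerset,
          percWeight G β H *
            #{p ∈ G.finsetWalkLength k u v | p.IsPath ∧ p.edges.toFinset ⊆ H} := by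
        rw [sum_comm]
        refine sum_congr rfl fun u _ => ?_
        rw [sum_comm]
        exact sum_congr rfl fun k _ => sum_comm
    _ ≤ _ := by
        gcongr with u _ k _ v _
        exact sum_percWeight_mul_card_filter_le G hβ0 k u v

end Percolation

section Regular

open Matrix

variable {G : SimpleGraph V} [DecidableRel G.Adj] {d : ℕ}

theorem adjMatrix_pow_mulVec_const_of_isRegularOfDegree {α : Type*} [Semiring α]
    (hreg : G.IsRegularOfDegree d) (k : ℕ) (a : α) :
    G.adjMatrix α ^ k *ᵥ Function.const V a = Function.const V ((d : α) ^ k * a) := by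
  induction k generalizing a with
  | zero => simp
  | succ k ih =>
    have hA : G.adjMatrix α *ᵥ Function.const V a = Function.const V (d * a) :=
      funext fun _ => SimpleGraph.adjMatrix_mulVec_const_apply_of_regular hreg
    rw [pow_succ, ← mulVec_mulVec, hA, ih, pow_succ, mul_assoc]

theorem sum_card_finsetWalkLength_of_isRegularOfDegree (hreg : G.IsRegularOfDegree d)
    (k : ℕ) (u : V) : ∑ v, #(G.finsetWalkLength k u v) = d ^ k := by
  have := congrFun (adjMatrix_pow_mulVec_const_of_isRegularOfDegree hreg k 1) u
  simpa [mulVec, dotProduct, SimpleGraph.adjMatrix_pow_apply_eq_card_walk,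
    SimpleGraph.card_set_walk_length_eq] using this

theorem exists_eigenvalues_eq_of_isRegularOfDegree [Nonempty V] (hreg : G.IsRegularOfDegree d)
    (hA : (G.adjMatrix ℝ).IsHermitian) : ∃ i, hA.eigenvalues i = d := by
  have hvec : Module.End.HasEigenvector (toLin' (G.adjMatrix ℝ)) d (Function.const V 1) := by
    refine ⟨?_, Function.const_ne_zero.2 one_ne_zero⟩
    rw [Module.End.mem_eigenspace_iff, toLin'_apply, ← pow_one (G.adjMatrix ℝ),
      adjMatrix_pow_mulVec_const_of_isRegularOfDegree hreg, pow_one, mul_one]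
    ext
    simp
  have hspec := Module.End.hasEigenvalue_iff_mem_spectrum.1
    (Module.End.hasEigenvalue_of_hasEigenvector hvec)
  rwa [spectrum_toLin', hA.spectrum_real_eq_range_eigenvalues] at hspec

theorem expectedFinalSize_le_of_isRegularOfDegree (hreg : G.IsRegularOfDegree d) {β : ℝ}
    (hβ0 : 0 ≤ β) (hβ1 : β ≤ 1) (hβd : β * d < 1) (I : Finset V) :
    expectedFinalSize G β I ≤ #I / (1 - β * d) := by
  calc expectedFinalSize G β I
      ≤ ∑ u ∈ I, ∑ k ∈ range (Fintype.card V), ∑ v, (#(G.finsetWalkLength k u v) : ℝ) * β ^ k :=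
        expectedFinalSize_le_sum_card_finsetWalkLength G hβ0 hβ1 I
    _ = #I * ∑ k ∈ range (Fintype.card V), (β * d) ^ k := by
        simp_rw [← sum_mul, ← Nat.cast_sum, sum_card_finsetWalkLength_of_isRegularOfDegree hreg,
          Nat.cast_pow, mul_pow, mul_comm, sum_const, nsmul_eq_mul]
    _ ≤ #I * (1 / (1 - β * d)) := by
        gcongr
        simpa using geom_sum_Ico_le_of_lt_one (m := 0) (by positivity) hβd
    _ = #I / (1 - β * d) := mul_one_div _ _

end Regular

theorem expectedFinalSize_le_of_spectral_regular_general
    (G : SimpleGraph V) [DecidableRel G.Adj] (d : ℕ) (hreg : G.IsRegularOfDegree d)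
    (β : ℝ) (hβ0 : 0 ≤ β) (hβ1 : β ≤ 1)
    (hA : (G.adjMatrix ℝ).IsHermitian) (lam1 : ℝ)
    (hmax : ∀ v, hA.eigenvalues v ≤ lam1)
    (hthr : β * lam1 < 1)
    (I : Finset V) (hI : I.Nonempty) :
    expectedFinalSize G β I ≤ (I.card : ℝ) / (1 - β * lam1) := by
  have : Nonempty V := let ⟨u, _⟩ := hI; ⟨u⟩
  obtain ⟨i, hi⟩ := exists_eigenvalues_eq_of_isRegularOfDegree hreg hA
  have hβd : β * d ≤ β * lam1 := mul_le_mul_of_nonneg_left (hi ▸ hmax i) hβ0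
  calc expectedFinalSize G β I ≤ #I / (1 - β * d) :=
        expectedFinalSize_le_of_isRegularOfDegree hreg hβ0 hβ1 (hβd.trans_lt hthr) I
    _ ≤ #I / (1 - β * lam1) :=
        div_le_div_of_nonneg_left (Nat.cast_nonneg _) (by linarith) (by linarith)

/-- For a `d`-regular graph, if `β λ₁ < 1` then the expected final size of the Reed–Frost
epidemic is at most `|X(0)| / (1 - β λ₁)`. -/
theorem expectedFinalSize_le_of_spectral_regular
    (G : SimpleGraph V) [DecidableRel G.Adj] (d : ℕ) (hreg : G.IsRegularOfDegree d)
    (β : ℝ) (hβ0 : 0 ≤ β) (hβ1 : β ≤ 1)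
    (hA : (G.adjMatrix ℝ).IsHermitian) (lam1 : ℝ)
    (hmax : ∀ v, hA.eigenvalues v ≤ lam1) (hmem : ∃ v, hA.eigenvalues v = lam1)
    (hthr : β * lam1 < 1)
    (I : Finset V) (hI : I.Nonempty) :
    expectedFinalSize G β I ≤ (I.card : ℝ) / (1 - β * lam1) :=
  expectedFinalSize_le_of_spectral_regular_general G d hreg β hβ0 hβ1 hA lam1 hmax hthr I hI

end VirusSpread
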